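/- Let n ≥ 2 and k ≥ 1 be integers, and put d = gcd(n+1, k) and r = (n+1)/d. If n is odd (so n ≥ 3), then the abelian group (Coker (1_k − X_k^{n+1}))^{(n−3)/2} ⊕ Coker ((1_k − X_k)·(1_k + X_k^{(n+1)/2})) is isomorphic to ℤ^{(nd−3d+2)/2} ⊕ (ℤ/2ℤ)^{d−1} if r is even, and to ℤ^{(nd−2d+2)/2} if r is odd. If n is even, then (Coker (1_k − X_k^{n+1}))^{(n−2)/2} ⊕ Coker (1_k − X_k) ≅ ℤ^{(nd−2d+2)/2}. -/

import Mathlib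

open Matrix Polynomial

/-- The `m × m` permutation matrix over `ℤ` of the cyclic permutation `(1,2,…,m)`:
its `(i,j)` entry is `1` iff `i ≡ j + 1 (mod m)`. -/
def cycMat (m : ℕ) : Matrix (Fin m) (Fin m) ℤ :=
  Matrix.of fun i j => if ((j : ℕ) + 1) % m = (i : ℕ) then 1 else 0

/-- `X_m ^ p` for an integer exponent `p`, well defined since `X_m ^ m = 1`. -/
def cycMatZPow (m : ℕ) (p : ℤ) : Matrix (Fin m) (Fin m) ℤ :=
  cycMat m ^ (p % (m : ℤ)).toNat

/-- The cokernel `ℤ^m / A·ℤ^n` of an integer matrix. -/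
abbrev coker {m n : Type} [Fintype m] [Fintype n] (A : Matrix m n ℤ) :=
  (m → ℤ) ⧸ LinearMap.range A.mulVecLin


/-- `s_p(A) = 1 - A + A² - ⋯ + (-1)^(p-1) A^(p-1)` for a square integer matrix `A`. -/
def sMat {n : Type} [Fintype n] [DecidableEq n] (p : ℕ) (A : Matrix n n ℤ) :
    Matrix n n ℤ :=
  ∑ i ∈ Finset.range p, ((-1 : ℤ) ^ i) • A ^ i


/-!
Identify `ℤ^k` with the group ring `ℤ[X]/(X^k - 1)` through the basis of powers of `X`. Then
`X_k` acts as multiplication by `X`, so `Coker p(X_k) ≅ ℤ[X]/(X^k - 1, p)` for `p ∈ ℤ[X]`.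
For `p = 1 - X^s` the ideal is `(X^gcd(s,k) - 1)`, with free quotient of rank `gcd(s,k)`.
For `p = (1 - X)(1 + X^m)`, `2m = n + 1`, the ideal also contains `X^d - 1`, `d = gcd(2m, k)`.
If `r = 2m/d` is odd, then `d = 2h` and the ideal is generated by the monic `(X - 1)(X^h + 1)`
of degree `h + 1`. If `r` is even, then `d ∣ m` and the ideal is `(X^d - 1, 2(1 - X))`; in
`ℤ[X]/(X^d - 1)` this is the set of elements with augmentation `0` and even coordinates, so the
quotient is `ℤ ⊕ (ℤ/2)^(d-1)`. Counting ranks finishes the proof.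
-/

open Module

section QuotientLemmas

variable {R : Type*} [CommRing R]

theorem Algebra.range_mulVecLin_leftMulMatrix {S ι : Type*} [CommRing S] [Algebra R S]
    [Fintype ι] [DecidableEq ι] (b : Basis ι R S) (a : S) :
    LinearMap.range (Algebra.leftMulMatrix b a).mulVecLin
      = ((Ideal.span {a}).restrictScalars R).map (b.equivFun : S →ₗ[R] ι → R) := by
  have : (Algebra.leftMulMatrix b a).mulVecLin
      = b.equivFun.toLinearMap ∘ₗ LinearMap.mulLeft R a ∘ₗ b.equivFun.symm.toLinearMap := by
    rw [← Matrix.toLin'_apply', Algebra.leftMulMatrix_apply, LinearMap.toMatrix,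
      LinearEquiv.trans_apply, Matrix.toLin'_toMatrix']
    rfl
  rw [this, LinearMap.range_comp, LinearMap.range_comp, LinearEquiv.range, Submodule.map_top]
  congr 1
  ext x
  simp [Ideal.mem_span_singleton', mul_comm]

noncomputable def Algebra.quotRangeLeftMulMatrixEquiv {S ι : Type*} [CommRing S] [Algebra R S]
    [Fintype ι] [DecidableEq ι] (b : Basis ι R S) (a : S) :
    ((ι → R) ⧸ LinearMap.range (Algebra.leftMulMatrix b a).mulVecLin)
      ≃ₗ[R] S ⧸ Ideal.span {a} :=
  (Submodule.Quotient.equiv _ _ b.equivFun.symm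
    ((Submodule.map_symm_eq_iff _).2 (Algebra.range_mulVecLin_leftMulMatrix b a).symm)).trans
    (Submodule.Quotient.restrictScalarsEquiv R _)

noncomputable def AdjoinRoot.quotSpanMkEquiv (f p : R[X]) :
    AdjoinRoot f ⧸ Ideal.span {AdjoinRoot.mk f p} ≃+* R[X] ⧸ Ideal.span {f, p} :=
  let q := (Ideal.Quotient.mk (Ideal.span {AdjoinRoot.mk f p})).comp (AdjoinRoot.mk f)
  have hker : RingHom.ker q = Ideal.span {f, p} := by
    rw [← RingHom.comap_ker, Ideal.mk_ker, ← Set.image_singleton, ← Ideal.map_span,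
      Ideal.comap_map_of_surjective' _ AdjoinRoot.mk_surjective, Ideal.span_insert, sup_comm]
    exact congrArg (· ⊔ _) Ideal.mk_ker
  ((Ideal.quotEquivOfEq hker.symm).trans (RingHom.quotientKerEquivOfSurjective
    (Ideal.Quotient.mk_surjective.comp AdjoinRoot.mk_surjective))).symm

noncomputable def quotSpanMonicEquiv {g : R[X]} (hg : g.Monic) {n : ℕ} (hn : g.natDegree = n) :
    (R[X] ⧸ Ideal.span {g}) ≃ₗ[R] (Fin n → R) :=
  ((AdjoinRoot.powerBasis' hg).basis.reindex (finCongr hn)).equivFun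

end QuotientLemmas

section Ideals

variable {R : Type*} [CommRing R] (x : R)

theorem Ideal.span_pow_sub_one_pair (a b : ℕ) :
    Ideal.span {x ^ a - 1, x ^ b - 1} = Ideal.span {x ^ Nat.gcd a b - 1} := by
  induction a, b using Nat.gcd.induction with
  | H0 b => simp
  | H1 a b _ ih =>
    obtain ⟨c, hc⟩ :=
      dvd_pow_sub_one_of_dvd (r := x) (Dvd.intro (b / a) rfl : a ∣ a * (b / a))
    have hsplit : x ^ b - 1 = (x ^ (b % a) - 1) + (x ^ a - 1) * (x ^ (b % a) * c) := by
      have : x ^ b = x ^ (b % a) * x ^ (a * (b / a)) := by rw [← pow_add, Nat.mod_add_div]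
      linear_combination this + x ^ (b % a) * hc
    rw [Nat.gcd_rec, ← ih, hsplit, Ideal.span_pair_add_left_mul, Ideal.span_pair_comm]

theorem Ideal.span_pow_sub_one_one_sub_pow (k s : ℕ) :
    Ideal.span {x ^ k - 1, 1 - x ^ s} = Ideal.span {x ^ Nat.gcd s k - 1} := by
  rw [← neg_sub (x ^ s) 1, Ideal.span_pair_neg, Ideal.span_pair_comm, Ideal.span_pow_sub_one_pair]

theorem one_sub_mul_one_add_pow_dvd (m : ℕ) : (1 - x) * (1 + x ^ m) ∣ x ^ (2 * m) - 1 :=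
  ⟨-∑ i ∈ Finset.range m, x ^ i, by linear_combination (-x ^ m - 1) * geom_sum_mul x m⟩

theorem Ideal.span_pow_sub_one_eq_of_dvd {y : R} {a : ℕ} (hy : y ∣ x ^ a - 1) (k : ℕ) :
    Ideal.span {x ^ k - 1, y} = Ideal.span {x ^ Nat.gcd a k - 1, y} := by
  apply le_antisymm <;>
    simp only [Ideal.span_le, Set.insert_subset_iff, Set.singleton_subset_iff, SetLike.mem_coe]
  · refine ⟨?_, Ideal.subset_span (by simp)⟩
    obtain ⟨c, hc⟩ := dvd_pow_sub_one_of_dvd (r := x) (Nat.gcd_dvd_right a k)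
    exact Ideal.mem_span_pair.2 ⟨c, 0, by rw [hc]; ring⟩
  · refine ⟨?_, Ideal.subset_span (by simp)⟩
    have : Ideal.span {x ^ a - 1, x ^ k - 1} ≤ Ideal.span {x ^ k - 1, y} := by
      rw [Ideal.span_pair_comm, Ideal.span_insert, Ideal.span_insert]
      exact sup_le_sup_left (Ideal.span_singleton_le_span_singleton.2 hy) _
    exact this (Ideal.span_pow_sub_one_pair x _ _ ▸ Ideal.mem_span_singleton_self _)

theorem Ideal.span_pow_sub_one_eq_span_two_sub_two_mul {g m : ℕ} (hgm : g ∣ m) :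
    Ideal.span {x ^ g - 1, (1 - x) * (1 + x ^ m)} = Ideal.span {x ^ g - 1, 2 - 2 * x} := by
  obtain ⟨c, hc⟩ := dvd_pow_sub_one_of_dvd (r := x) hgm
  rw [show (1 - x) * (1 + x ^ m) = 2 - 2 * x + (x ^ g - 1) * ((1 - x) * c) by
    linear_combination (1 - x) * hc, Ideal.span_pair_add_left_mul]

theorem Ideal.span_pow_sub_one_eq_span_sub_one_mul {h m c : ℕ} (hm : m = h * (2 * c + 1)) :
    Ideal.span {x ^ (2 * h) - 1, (1 - x) * (1 + x ^ m)} = Ideal.span {(x - 1) * (x ^ h + 1)} := by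
  obtain ⟨q, hq⟩ := dvd_pow_sub_one_of_dvd (r := x) (Dvd.intro c rfl : 2 * h ∣ 2 * h * c)
  have hsplit : (1 - x) * (1 + x ^ m)
      = -((x - 1) * (x ^ h + 1)) + (x ^ (2 * h) - 1) * ((1 - x) * x ^ h * q) := by
    rw [hm]; linear_combination (1 - x) * x ^ h * hq
  rw [hsplit, Ideal.span_pair_add_left_mul, Ideal.span_pair_neg]
  refine Submodule.span_insert_eq_span
    (Ideal.mem_span_singleton'.2 ⟨∑ i ∈ Finset.range h, x ^ i, ?_⟩)
  linear_combination (x ^ h + 1) * geom_sum_mul x h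

end Ideals

section CyclicGroupRing

variable {k : ℕ}

theorem monic_X_pow_sub_one (hk : 0 < k) : ((X : ℤ[X]) ^ k - 1).Monic := by
  simpa using monic_X_pow_sub_C (1 : ℤ) hk.ne'

theorem natDegree_X_pow_sub_one (k : ℕ) : ((X : ℤ[X]) ^ k - 1).natDegree = k := by
  simpa using natDegree_X_pow_sub_C (n := k) (r := (1 : ℤ))

noncomputable def cycBasis (hk : 0 < k) : Basis (Fin k) ℤ (AdjoinRoot ((X : ℤ[X]) ^ k - 1)) :=
  (AdjoinRoot.powerBasis' (monic_X_pow_sub_one hk)).basis.reindex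
    (finCongr (natDegree_X_pow_sub_one k))

theorem cycBasis_apply (hk : 0 < k) (i : Fin k) :
    cycBasis hk i = AdjoinRoot.root _ ^ (i : ℕ) := by
  rw [cycBasis, Basis.reindex_apply, PowerBasis.basis_eq_pow]
  rfl

theorem cycMat_eq_leftMulMatrix (hk : 0 < k) :
    cycMat k = Algebra.leftMulMatrix (cycBasis hk) (AdjoinRoot.root _) := by
  have hroot : AdjoinRoot.root ((X : ℤ[X]) ^ k - 1) ^ k = 1 := by
    have := AdjoinRoot.eval₂_root ((X : ℤ[X]) ^ k - 1)
    rwa [eval₂_sub, eval₂_X_pow, eval₂_one, sub_eq_zero] at this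
  ext i j
  have : AdjoinRoot.root _ * cycBasis hk j
      = cycBasis hk ⟨((j : ℕ) + 1) % k, Nat.mod_lt _ hk⟩ := by
    rw [cycBasis_apply, cycBasis_apply, ← pow_succ']
    conv_lhs =>
      rw [← Nat.mod_add_div ((j : ℕ) + 1) k, pow_add, pow_mul, hroot, one_pow, mul_one]
  rw [Algebra.leftMulMatrix_eq_repr_mul, this, Basis.repr_self, Finsupp.single_apply, cycMat,
    Matrix.of_apply]
  simp [Fin.ext_iff]

noncomputable def cokerAevalCycMatEquiv (hk : 0 < k) (p : ℤ[X]) :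
    coker (aeval (cycMat k) p) ≃ₗ[ℤ] ℤ[X] ⧸ Ideal.span {X ^ k - 1, p} :=
  (Submodule.quotEquivOfEq _ _ (by
      rw [cycMat_eq_leftMulMatrix hk, aeval_algHom_apply, AdjoinRoot.aeval_eq])).trans <|
    (Algebra.quotRangeLeftMulMatrixEquiv (cycBasis hk) _).trans
      (AdjoinRoot.quotSpanMkEquiv _ p).toAddEquiv.toIntLinearEquiv

noncomputable def cycAugmentation (k : ℕ) : AdjoinRoot ((X : ℤ[X]) ^ k - 1) →+* ℤ :=
  AdjoinRoot.lift (RingHom.id ℤ) 1 (by simp)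

@[simp]
theorem cycAugmentation_root : cycAugmentation k (AdjoinRoot.root _) = 1 :=
  AdjoinRoot.lift_root _

theorem cycAugmentation_eq_sum_repr (hk : 0 < k) (x : AdjoinRoot ((X : ℤ[X]) ^ k - 1)) :
    cycAugmentation k x = ∑ i, (cycBasis hk).repr x i := by
  conv_lhs => rw [← (cycBasis hk).sum_repr x]
  simp [cycBasis_apply]

theorem root_sub_one_dvd_of_cycAugmentation_eq_zero {x : AdjoinRoot ((X : ℤ[X]) ^ k - 1)}
    (hx : cycAugmentation k x = 0) : AdjoinRoot.root _ - 1 ∣ x := by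
  obtain ⟨p, rfl⟩ := AdjoinRoot.mk_surjective x
  have : IsRoot p 1 := by simpa [cycAugmentation, AdjoinRoot.lift_mk, IsRoot] using hx
  obtain ⟨q, rfl⟩ := dvd_iff_isRoot.2 this
  exact ⟨AdjoinRoot.mk _ q, by simp⟩

end CyclicGroupRing

section ParityMap

variable (d : ℕ)

noncomputable def cycParityMap :
    AdjoinRoot ((X : ℤ[X]) ^ (d + 1) - 1) →ₗ[ℤ] ℤ × (Fin d → ZMod 2) :=
  (cycAugmentation (d + 1)).toIntAlgHom.toLinearMap.prod <| LinearMap.pi fun j =>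
    (Int.castAddHom (ZMod 2)).toIntLinearMap ∘ₗ LinearMap.proj j.succ ∘ₗ
      (cycBasis d.add_one_pos).equivFun.toLinearMap

variable {d}

theorem cycParityMap_apply (x : AdjoinRoot ((X : ℤ[X]) ^ (d + 1) - 1)) :
    cycParityMap d x
      = (cycAugmentation (d + 1) x, fun j => ((cycBasis d.add_one_pos).repr x j.succ : ZMod 2)) :=
  rfl

theorem cycParityMap_surjective : Function.Surjective (cycParityMap d) := by
  rintro ⟨a, t⟩
  set b := cycBasis d.add_one_pos
  let v : Fin (d + 1) → ℤ := Fin.cons (a - ∑ j, ((t j).val : ℤ)) fun j => (t j).val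
  have hv : ⇑(b.repr (b.equivFun.symm v)) = v := b.equivFun.apply_symm_apply v
  refine ⟨b.equivFun.symm v, ?_⟩
  rw [cycParityMap_apply, cycAugmentation_eq_sum_repr d.add_one_pos, hv]
  ext j
  · simp [v, Fin.sum_univ_succ]
  · simp [v]

theorem ker_cycParityMap :
    LinearMap.ker (cycParityMap d) =
      (Ideal.span {2 - 2 * AdjoinRoot.root ((X : ℤ[X]) ^ (d + 1) - 1)}).restrictScalars ℤ := by
  set b := cycBasis d.add_one_pos
  ext x
  simp only [LinearMap.mem_ker, Submodule.restrictScalars_mem, Ideal.mem_span_singleton',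
    cycParityMap_apply, Prod.ext_iff, Prod.fst_zero, Prod.snd_zero, funext_iff, Pi.zero_apply,
    ZMod.intCast_zmod_eq_zero_iff_dvd]
  constructor
  · rintro ⟨hε, hpar⟩
    -- the coordinates sum to `ε x = 0`, so the `0`-th one is even as well
    have heven : ∀ i, (2 : ℤ) ∣ b.repr x i := by
      have hsum := cycAugmentation_eq_sum_repr d.add_one_pos x
      rw [hε, Fin.sum_univ_succ] at hsum
      refine Fin.cases ?_ hpar
      rw [eq_neg_of_add_eq_zero_left hsum.symm]
      exact (Finset.dvd_sum fun j _ => hpar j).neg_right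
    obtain ⟨y, hy⟩ := b.equivFun.surjective fun i => b.repr x i / 2
    have hxy : x = (2 : ℤ) • y := b.equivFun.injective <| funext fun i => by
      rw [map_zsmul, hy, Pi.smul_apply, smul_eq_mul, Int.mul_ediv_cancel' (heven i),
        Basis.equivFun_apply]
    have hεy : cycAugmentation (d + 1) y = 0 := by
      rw [hxy, map_zsmul, smul_eq_mul] at hε
      exact (mul_eq_zero.1 hε).resolve_left two_ne_zero
    obtain ⟨z, hz⟩ := root_sub_one_dvd_of_cycAugmentation_eq_zero hεy
    exact ⟨-z, by rw [hxy, hz, zsmul_eq_mul]; push_cast; ring⟩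
  · rintro ⟨c, rfl⟩
    refine ⟨by simp, fun j => ⟨b.repr (c * (1 - AdjoinRoot.root _)) j.succ, ?_⟩⟩
    rw [show c * (2 - 2 * AdjoinRoot.root _) = (2 : ℤ) • (c * (1 - AdjoinRoot.root _)) by
      rw [zsmul_eq_mul]; push_cast; ring, map_zsmul]
    rfl

noncomputable def quotSpanXPowSubOneTwoSubTwoXEquiv :
    (ℤ[X] ⧸ Ideal.span {X ^ (d + 1) - 1, (2 - 2 * X : ℤ[X])})
      ≃ₗ[ℤ] ℤ × (Fin d → ZMod 2) :=
  ((AdjoinRoot.quotSpanMkEquiv _ _).symm.trans (Ideal.quotEquivOfEq (by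
      rw [map_sub, map_mul, map_ofNat, AdjoinRoot.mk_X]))).toAddEquiv.toIntLinearEquiv.trans <|
    (Submodule.Quotient.restrictScalarsEquiv ℤ _).symm.trans <|
      (Submodule.quotEquivOfEq _ _ ker_cycParityMap.symm).trans
        ((cycParityMap d).quotKerEquivOfSurjective cycParityMap_surjective)

end ParityMap

section Cokernels

variable {k : ℕ}

theorem nonempty_coker_one_sub_cycMat_pow {s : ℕ} (hk : 0 < k) (hs : 0 < s) :
    Nonempty (coker (1 - cycMat k ^ s) ≃ₗ[ℤ] (Fin (Nat.gcd s k) → ℤ)) := by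
  rw [show 1 - cycMat k ^ s = aeval (cycMat k) (1 - X ^ s : ℤ[X]) by simp]
  exact ⟨(cokerAevalCycMatEquiv hk _).trans <|
    (Ideal.quotEquivOfEq
        (Ideal.span_pow_sub_one_one_sub_pow X k s)).toAddEquiv.toIntLinearEquiv.trans
      (quotSpanMonicEquiv (monic_X_pow_sub_one (Nat.gcd_pos_of_pos_left k hs))
        (natDegree_X_pow_sub_one _))⟩

theorem one_sub_cycMat_mul_eq_aeval (k m : ℕ) :
    (1 - cycMat k) * (1 + cycMat k ^ m) = aeval (cycMat k) ((1 - X) * (1 + X ^ m) : ℤ[X]) := by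
  simp

theorem monic_X_sub_one_mul_X_pow_add_one {h : ℕ} (hh : 0 < h) :
    ((X - 1) * (X ^ h + 1) : ℤ[X]).Monic := by
  simpa using (monic_X_sub_C (1 : ℤ)).mul (monic_X_pow_add_C (1 : ℤ) hh.ne')

theorem natDegree_X_sub_one_mul_X_pow_add_one {h : ℕ} (hh : 0 < h) :
    ((X - 1) * (X ^ h + 1) : ℤ[X]).natDegree = h + 1 := by
  have h1 : ((X : ℤ[X]) - 1).natDegree = 1 := by simpa using natDegree_X_sub_C (1 : ℤ)
  have h2 : ((X : ℤ[X]) ^ h + 1).natDegree = h := by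
    simpa using natDegree_X_pow_add_C (n := h) (r := (1 : ℤ))
  rw [natDegree_mul (ne_zero_of_natDegree_gt (h1 ▸ Nat.zero_lt_one))
    (ne_zero_of_natDegree_gt (h2 ▸ hh)), h1, h2, add_comm]

theorem nonempty_coker_one_sub_mul_of_odd {m h c : ℕ} (hk : 0 < k) (hh : 0 < h)
    (hg : Nat.gcd (2 * m) k = 2 * h) (hm : m = h * (2 * c + 1)) :
    Nonempty (coker ((1 - cycMat k) * (1 + cycMat k ^ m)) ≃ₗ[ℤ] (Fin (h + 1) → ℤ)) := by
  rw [one_sub_cycMat_mul_eq_aeval]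
  have hspan : Ideal.span {X ^ k - 1, (1 - X) * (1 + X ^ m)}
      = Ideal.span {((X - 1) * (X ^ h + 1) : ℤ[X])} := by
    rw [Ideal.span_pow_sub_one_eq_of_dvd X (one_sub_mul_one_add_pow_dvd X m), hg,
      Ideal.span_pow_sub_one_eq_span_sub_one_mul X hm]
  exact ⟨(cokerAevalCycMatEquiv hk _).trans <|
    (Ideal.quotEquivOfEq hspan).toAddEquiv.toIntLinearEquiv.trans <|
      quotSpanMonicEquiv (monic_X_sub_one_mul_X_pow_add_one hh)
        (natDegree_X_sub_one_mul_X_pow_add_one hh)⟩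

theorem nonempty_coker_one_sub_mul_of_dvd {m d : ℕ} (hk : 0 < k)
    (hg : Nat.gcd (2 * m) k = d + 1) (hdm : d + 1 ∣ m) :
    Nonempty (coker ((1 - cycMat k) * (1 + cycMat k ^ m)) ≃ₗ[ℤ]
      ℤ × (Fin d → ZMod 2)) := by
  rw [one_sub_cycMat_mul_eq_aeval]
  have hspan : Ideal.span {X ^ k - 1, (1 - X) * (1 + X ^ m)}
      = Ideal.span {X ^ (d + 1) - 1, (2 - 2 * X : ℤ[X])} := by
    rw [Ideal.span_pow_sub_one_eq_of_dvd X (one_sub_mul_one_add_pow_dvd X m), hg,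
      Ideal.span_pow_sub_one_eq_span_two_sub_two_mul X hdm]
  exact ⟨(cokerAevalCycMatEquiv hk _).trans <|
    (Ideal.quotEquivOfEq hspan).toAddEquiv.toIntLinearEquiv.trans
      quotSpanXPowSubOneTwoSubTwoXEquiv⟩

end Cokernels

section Assembly

variable {R M N T : Type*} [CommRing R] [StrongRankCondition R] [AddCommGroup M] [Module R M]
  [AddCommGroup N] [Module R N] {s p t : ℕ}

theorem nonempty_pi_prod_linearEquiv {q : ℕ} (eM : M ≃ₗ[R] (Fin p → R))
    (eN : N ≃ₗ[R] (Fin q → R)) (h : s * p + q = t) :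
    Nonempty (((Fin s → M) × N) ≃ₗ[R] (Fin t → R)) := by
  obtain ⟨e⟩ := FiniteDimensional.nonempty_linearEquiv_of_finrank_eq
    (R := R) (M := (Fin s → Fin p → R) × (Fin q → R)) (M' := Fin t → R)
    (by simp [Module.finrank_pi_fintype, ← h])
  exact ⟨((LinearEquiv.piCongrRight fun _ => eM).prodCongr eN).trans e⟩

theorem nonempty_pi_prod_linearEquiv_prod [AddCommGroup T] [Module R T]
    (eM : M ≃ₗ[R] (Fin p → R)) (eN : N ≃ₗ[R] R × T) (h : s * p + 1 = t) :
    Nonempty (((Fin s → M) × N) ≃ₗ[R] (Fin t → R) × T) := by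
  obtain ⟨e⟩ := FiniteDimensional.nonempty_linearEquiv_of_finrank_eq
    (R := R) (M := (Fin s → Fin p → R) × R) (M' := Fin t → R)
    (by simp [Module.finrank_pi_fintype, ← h])
  exact ⟨((LinearEquiv.piCongrRight fun _ => eM).prodCongr eN).trans <|
    (LinearEquiv.prodAssoc R _ _ _).symm.trans (e.prodCongr (LinearEquiv.refl R T))⟩

end Assembly

section Parts

variable {n k d : ℕ}

theorem nonempty_linearEquiv_of_odd_of_even (hn : 2 ≤ n) (hk : 0 < k)
    (hd : d = Nat.gcd (n + 1) k) (hn_odd : Odd n) (hr : Even ((n + 1) / d)) :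
    Nonempty (((Fin ((n - 3) / 2) → coker (1 - cycMat k ^ (n + 1))) ×
        coker ((1 - cycMat k) * (1 + cycMat k ^ ((n + 1) / 2)))) ≃ₗ[ℤ]
      ((Fin ((n * d - 3 * d + 2) / 2) → ℤ) × (Fin (d - 1) → ZMod 2))) := by
  obtain ⟨E⟩ := nonempty_coker_one_sub_cycMat_pow hk n.succ_pos
  rw [← hd] at E
  obtain ⟨a, rfl⟩ := hn_odd
  obtain ⟨t, ht⟩ := hr
  have hm : (2 * a + 1 + 1) / 2 = a + 1 := by omega
  have hdm : d ∣ a + 1 := by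
    have := Nat.div_mul_cancel (hd ▸ Nat.gcd_dvd_left _ _ : d ∣ 2 * a + 1 + 1)
    exact ⟨t, by rw [ht] at this; linarith⟩
  obtain ⟨d', rfl⟩ : ∃ d', d = d' + 1 :=
    ⟨d - 1, by have := Nat.pos_of_dvd_of_pos hdm a.succ_pos; omega⟩
  obtain ⟨E'⟩ :=
    nonempty_coker_one_sub_mul_of_dvd hk (m := a + 1) (d := d') (by rw [hd]; ring_nf) hdm
  rw [hm, Nat.add_sub_cancel]
  refine nonempty_pi_prod_linearEquiv_prod E E' ?_
  obtain ⟨b, rfl⟩ : ∃ b, a = b + 1 := ⟨a - 1, by omega⟩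
  rw [show (2 * (b + 1) + 1 - 3) / 2 = b by omega]
  have : (2 * (b + 1) + 1) * (d' + 1) = 2 * (b * (d' + 1)) + 3 * (d' + 1) := by ring
  omega

theorem nonempty_linearEquiv_of_odd_of_odd (hn : 2 ≤ n) (hk : 0 < k)
    (hd : d = Nat.gcd (n + 1) k) (hn_odd : Odd n) (hr : Odd ((n + 1) / d)) :
    Nonempty (((Fin ((n - 3) / 2) → coker (1 - cycMat k ^ (n + 1))) ×
        coker ((1 - cycMat k) * (1 + cycMat k ^ ((n + 1) / 2)))) ≃ₗ[ℤ]
      (Fin ((n * d - 2 * d + 2) / 2) → ℤ)) := by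
  obtain ⟨E⟩ := nonempty_coker_one_sub_cycMat_pow hk n.succ_pos
  rw [← hd] at E
  obtain ⟨a, rfl⟩ := hn_odd
  obtain ⟨c, hc⟩ := hr
  have hm : (2 * a + 1 + 1) / 2 = a + 1 := by omega
  have hdr : 2 * (a + 1) = d * (2 * c + 1) := by
    have := Nat.div_mul_cancel (hd ▸ Nat.gcd_dvd_left _ _ : d ∣ 2 * a + 1 + 1)
    rw [hc] at this; linarith
  obtain ⟨h, rfl⟩ : 2 ∣ d := by
    have : 2 ∣ d * (2 * c + 1) := ⟨a + 1, hdr.symm⟩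
    exact (Nat.Coprime.dvd_mul_right (Nat.coprime_two_left.2 (odd_two_mul_add_one c))).1 this
  have hmh : a + 1 = h * (2 * c + 1) := by linarith
  have hh : 0 < h := Nat.pos_of_ne_zero (by rintro rfl; simp at hmh)
  obtain ⟨E'⟩ := nonempty_coker_one_sub_mul_of_odd hk hh (m := a + 1) (by rw [hd]; ring_nf) hmh
  rw [hm]
  refine nonempty_pi_prod_linearEquiv E E' ?_
  obtain ⟨b, rfl⟩ : ∃ b, a = b + 1 := ⟨a - 1, by omega⟩
  rw [show (2 * (b + 1) + 1 - 3) / 2 = b by omega]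
  have : (2 * (b + 1) + 1) * (2 * h) = 2 * (b * (2 * h)) + 2 * (2 * h) + 2 * h := by ring
  omega

theorem nonempty_linearEquiv_of_even (hk : 0 < k) (hd : d = Nat.gcd (n + 1) k) (hn : Even n) :
    Nonempty (((Fin ((n - 2) / 2) → coker (1 - cycMat k ^ (n + 1))) × coker (1 - cycMat k))
      ≃ₗ[ℤ] (Fin ((n * d - 2 * d + 2) / 2) → ℤ)) := by
  obtain ⟨E⟩ := nonempty_coker_one_sub_cycMat_pow hk n.succ_pos
  rw [← hd] at E
  obtain ⟨E'⟩ := nonempty_coker_one_sub_cycMat_pow hk Nat.one_pos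
  rw [pow_one, Nat.gcd_one_left] at E'
  refine nonempty_pi_prod_linearEquiv E E' ?_
  obtain ⟨a, rfl⟩ := hn
  rw [show (a + a - 2) / 2 = a - 1 by omega]
  rcases Nat.eq_zero_or_pos a with rfl | ha
  · simp
  obtain ⟨b, rfl⟩ : ∃ b, a = b + 1 := ⟨a - 1, by omega⟩
  have : (b + 1 + (b + 1)) * d = 2 * (b * d) + 2 * d := by ring
  rw [Nat.add_sub_cancel]
  omega

end Parts

theorem stmt_19 (n k : ℕ) (hn : 2 ≤ n) (hk : 1 ≤ k) (d r : ℕ)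
    (hd : d = Nat.gcd (n + 1) k) (hr : r = (n + 1) / d) :
    (Odd n → Even r → Nonempty (
      (((Fin ((n - 3) / 2) → coker (1 - cycMat k ^ (n + 1))) ×
        coker ((1 - cycMat k) * (1 + cycMat k ^ ((n + 1) / 2)))) ≃+
      ((Fin ((n * d - 3 * d + 2) / 2) → ℤ) × (Fin (d - 1) → ZMod 2))))) ∧
    (Odd n → Odd r → Nonempty (
      (((Fin ((n - 3) / 2) → coker (1 - cycMat k ^ (n + 1))) ×
        coker ((1 - cycMat k) * (1 + cycMat k ^ ((n + 1) / 2)))) ≃+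
      (Fin ((n * d - 2 * d + 2) / 2) → ℤ)))) ∧
    (Even n → Nonempty (
      (((Fin ((n - 2) / 2) → coker (1 - cycMat k ^ (n + 1))) ×
        coker (1 - cycMat k)) ≃+
      (Fin ((n * d - 2 * d + 2) / 2) → ℤ)))) := by
  subst hr
  refine ⟨fun hn_odd hr => ?_, fun hn_odd hr => ?_, fun hn_even => ?_⟩
  · obtain ⟨e⟩ := nonempty_linearEquiv_of_odd_of_even hn hk hd hn_odd hr
    exact ⟨e.toAddEquiv⟩
  · obtain ⟨e⟩ := nonempty_linearEquiv_of_odd_of_odd hn hk hd hn_odd hr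
    exact ⟨e.toAddEquiv⟩
  · obtain ⟨e⟩ := nonempty_linearEquiv_of_even hk hd hn_even
    exact ⟨e.toAddEquiv⟩
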